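/- Let (A₀,A₁) be a compatible quasi-Banach couple, 0 < r ≤ ∞ and b ∈ SV with ‖t^{-1/r} b(t)‖_{r,(0,∞)} < ∞. Then the limiting L-space (A₀,A₁)^{𝓛}_{1,r,b,∞,1}, defined by the quasi-norm ‖f‖ = ‖ t^{-1/r} b(t) sup_{0<u<t} u^{-1} K(u,f) ‖_{r,(0,∞)}, coincides (with equivalent quasi-norms) with the Gagliardo completion A₁ +_∞ A₀ = { f ∈ A₀+A₁ : sup_{t>0} t^{-1} K(t,f) < ∞ } normed by sup_{t>0} t^{-1} K(t,f). -/

import Mathlib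

open MeasureTheory Set ENNReal

/-- Two positive functions are equivalent on `(0,∞)`. -/
def EquivOn (f g : ℝ → ℝ) : Prop :=
  ∃ c C : ℝ, 0 < c ∧ ∀ t : ℝ, 0 < t → c * g t ≤ f t ∧ f t ≤ C * g t

/-- `b` is slowly varying on `(0,∞)`: it is positive and measurable, and for every `ε > 0`
the function `t ^ ε * b t` is equivalent to a non-decreasing function while
`t ^ (-ε) * b t` is equivalent to a non-increasing function. -/
def IsSV (b : ℝ → ℝ) : Prop :=
  Measurable b ∧ (∀ t : ℝ, 0 < t → 0 < b t) ∧
  ∀ ε : ℝ, 0 < ε →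
    (∃ g : ℝ → ℝ, MonotoneOn g (Ioi 0) ∧ EquivOn (fun t => t ^ ε * b t) g) ∧
    (∃ g : ℝ → ℝ, AntitoneOn g (Ioi 0) ∧ EquivOn (fun t => t ^ (-ε) * b t) g)

/-- The `L_q` quasi-norm (with values in `ℝ≥0∞`) of a nonnegative function `g`
on the set `s`, `0 < q ≤ ∞`. -/
noncomputable def qN (q : ℝ≥0∞) (g : ℝ → ℝ≥0∞) (s : Set ℝ) : ℝ≥0∞ :=
  if q = ∞ then essSup g (volume.restrict s)
  else (∫⁻ u in s, g u ^ q.toReal) ^ (1 / q.toReal)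

/-- The real number `1/q`, with the convention `1/∞ = 0`. -/
noncomputable def iq (q : ℝ≥0∞) : ℝ := (q⁻¹).toReal

/-- The Peetre K-functional for a compatible couple of quasi-normed spaces, modelled by
two nonnegative quasi-norms `N₀, N₁` on an ambient additive group `E`. -/
noncomputable def Kf {E : Type*} [AddCommGroup E] (N₀ N₁ : E → ℝ) (t : ℝ) (f : E) : ℝ :=
  sInf {r : ℝ | ∃ g h : E, f = g + h ∧ r = N₀ g + t * N₁ h}

/-!
Since `t ↦ t⁻¹ K(t,f)` is non-increasing, its supremum over `(0,t)` does not depend on `t > 0`: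
it is the Gagliardo quasi-norm `S = sup_{u>0} u⁻¹ K(u,f)`. Hence the L-space quasi-norm of `f` is
`‖t^(-1/r) b(t)‖_{r,(0,∞)} · S`, and the constant factor is finite by assumption and nonzero
because `b > 0`.
-/

section KFunctional

variable {E : Type*} [AddCommGroup E] {N₀ N₁ : E → ℝ}

lemma Kf_le (hN₀ : ∀ x, 0 ≤ N₀ x) (hN₁ : ∀ x, 0 ≤ N₁ x) {t : ℝ} (ht : 0 ≤ t)
    {f g h : E} (hf : f = g + h) : Kf N₀ N₁ t f ≤ N₀ g + t * N₁ h := by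
  refine csInf_le ⟨0, ?_⟩ ⟨g, h, hf, rfl⟩
  rintro x ⟨g', h', -, rfl⟩
  exact add_nonneg (hN₀ g') (mul_nonneg ht (hN₁ h'))

lemma le_Kf {t a : ℝ} {f : E} (h : ∀ g h : E, f = g + h → a ≤ N₀ g + t * N₁ h) :
    a ≤ Kf N₀ N₁ t f :=
  le_csInf ⟨N₀ f + t * N₁ 0, f, 0, (add_zero f).symm, rfl⟩ <| by
    rintro x ⟨g, h', hf, rfl⟩
    exact h g h' hf

lemma antitoneOn_Kf_div (hN₀ : ∀ x, 0 ≤ N₀ x) (hN₁ : ∀ x, 0 ≤ N₁ x) (f : E) :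
    AntitoneOn (fun t => Kf N₀ N₁ t f / t) (Ioi 0) := by
  intro s (hs : 0 < s) u (hu : 0 < u) hsu
  have hscaled : s / u * Kf N₀ N₁ u f ≤ Kf N₀ N₁ s f := by
    refine le_Kf fun g h hf => ?_
    calc s / u * Kf N₀ N₁ u f ≤ s / u * (N₀ g + u * N₁ h) := by
          gcongr
          exact Kf_le hN₀ hN₁ hu.le hf
      _ = s / u * N₀ g + s * N₁ h := by field_simp
      _ ≤ N₀ g + s * N₁ h := by
          gcongr
          exact mul_le_of_le_one_left (hN₀ g) ((div_le_one hu).mpr hsu)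
  calc Kf N₀ N₁ u f / u = s / u * Kf N₀ N₁ u f / s := by field_simp
    _ ≤ Kf N₀ N₁ s f / s := by gcongr

end KFunctional

lemma iSup_Ioo_eq_iSup_Ioi_of_antitoneOn {α : Type*} [CompleteLattice α] {g : ℝ → α}
    (hg : AntitoneOn g (Ioi 0)) {t : ℝ} (ht : 0 < t) :
    ⨆ u ∈ Ioo 0 t, g u = ⨆ u ∈ Ioi 0, g u := by
  refine le_antisymm (biSup_mono fun u hu => hu.1) (iSup₂_le fun u (hu : 0 < u) => ?_)
  have hv : 0 < min u (t / 2) := lt_min hu (half_pos ht)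
  refine le_iSup₂_of_le (min u (t / 2)) ⟨hv, (min_le_right _ _).trans_lt (half_lt_self ht)⟩ ?_
  exact hg hv hu (min_le_left _ _)

section QuasiNorm

variable {q : ℝ≥0∞} {g : ℝ → ℝ≥0∞} {s : Set ℝ}

lemma qN_congr {g' : ℝ → ℝ≥0∞} (hs : MeasurableSet s) (h : EqOn g g' s) :
    qN q g s = qN q g' s := by
  unfold qN
  split_ifs
  · exact essSup_congr_ae (ae_restrict_of_forall_mem hs h)
  · rw [setLIntegral_congr_fun hs fun x hx => by rw [h hx]]

lemma qN_mul_const (hq : 0 < q) (hg : AEMeasurable g (volume.restrict s)) (c : ℝ≥0∞) :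
    qN q (fun t => g t * c) s = qN q g s * c := by
  unfold qN
  split_ifs with hqt
  · simp_rw [mul_comm _ c]
    exact ENNReal.essSup_const_mul
  · have hp : 0 < q.toReal := ENNReal.toReal_pos hq.ne' hqt
    simp_rw [ENNReal.mul_rpow_of_nonneg _ _ hp.le]
    rw [lintegral_mul_const'' _ (hg.pow_const _),
      ENNReal.mul_rpow_of_nonneg _ _ (one_div_pos.2 hp).le, ← ENNReal.rpow_mul, mul_one_div,
      div_self hp.ne', ENNReal.rpow_one]

lemma qN_ne_zero (hq : 0 < q) (hg : AEMeasurable g (volume.restrict s)) (hs : MeasurableSet s)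
    (hvol : volume s ≠ 0) (hpos : ∀ t ∈ s, g t ≠ 0) : qN q g s ≠ 0 := by
  have hnot : ¬ g =ᵐ[volume.restrict s] 0 := fun h0 => by
    have := ae_restrict_neBot.2 hvol
    obtain ⟨t, ht0, hts⟩ := (h0.and (ae_restrict_mem hs)).exists
    exact hpos t hts ht0
  unfold qN
  split_ifs with hqt
  · exact fun h0 => hnot (ENNReal.essSup_eq_zero_iff.1 h0)
  · have hp : 0 < q.toReal := ENNReal.toReal_pos hq.ne' hqt
    refine fun h0 => hnot ?_
    rcases ENNReal.rpow_eq_zero_iff.1 h0 with ⟨hI, -⟩ | ⟨-, hneg⟩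
    · filter_upwards [(lintegral_eq_zero_iff' (hg.pow_const _)).1 hI] with t ht
      exact (ENNReal.rpow_eq_zero_iff_of_pos hp).1 ht
    · exact absurd hneg (one_div_pos.2 hp).not_gt

end QuasiNorm

lemma IsSV.measurable_weight {b : ℝ → ℝ} (hb : IsSV b) (a : ℝ) :
    Measurable fun t => ENNReal.ofReal (t ^ a * b t) :=
  ((measurable_id.pow_const a).mul hb.1).ennreal_ofReal

lemma IsSV.weight_ne_zero {b : ℝ → ℝ} (hb : IsSV b) (a : ℝ) {t : ℝ} (ht : t ∈ Ioi 0) :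
    ENNReal.ofReal (t ^ a * b t) ≠ 0 :=
  (ENNReal.ofReal_pos.2 (mul_pos (Real.rpow_pos_of_pos ht a) (hb.2.1 t ht))).ne'

/-- For a compatible couple, `0 < r ≤ ∞` and `b ∈ SV` with `‖t^(-1/r) b(t)‖_{r,(0,∞)} < ∞`,
the quasi-norm of the limiting L-space `(A₀,A₁)^𝓛_{1,r,b,∞,1}`, namely
`‖ t^(-1/r) b(t) sup_{0<u<t} u⁻¹ K(u,f) ‖_{r,(0,∞)}`, is equivalent to the quasi-norm
`sup_{t>0} t⁻¹ K(t,f)` of the Gagliardo completion `A₁ +_∞ A₀`, uniformly in `f`. -/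
theorem stmt15 {E : Type*} [AddCommGroup E] (N₀ N₁ : E → ℝ)
    (hN₀ : ∀ x, 0 ≤ N₀ x) (hN₁ : ∀ x, 0 ≤ N₁ x)
    (b : ℝ → ℝ) (hb : IsSV b) (r : ℝ≥0∞) (hr : 0 < r)
    (hbfin : qN r (fun t => ENNReal.ofReal (t ^ (-(iq r)) * b t)) (Ioi 0) ≠ ∞) :
    ∃ c C : ℝ≥0∞, c ≠ 0 ∧ C ≠ ∞ ∧ ∀ f : E,
      c * (⨆ t ∈ Ioi (0 : ℝ), ENNReal.ofReal (Kf N₀ N₁ t f / t))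
          ≤ qN r (fun t => ENNReal.ofReal (t ^ (-(iq r)) * b t) *
              ⨆ u ∈ Ioo (0 : ℝ) t, ENNReal.ofReal (Kf N₀ N₁ u f / u)) (Ioi 0) ∧
        qN r (fun t => ENNReal.ofReal (t ^ (-(iq r)) * b t) *
            ⨆ u ∈ Ioo (0 : ℝ) t, ENNReal.ofReal (Kf N₀ N₁ u f / u)) (Ioi 0)
          ≤ C * ⨆ t ∈ Ioi (0 : ℝ), ENNReal.ofReal (Kf N₀ N₁ t f / t) := by
  set w : ℝ → ℝ≥0∞ := fun t => ENNReal.ofReal (t ^ (-(iq r)) * b t)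
  have hw_ne_zero : qN r w (Ioi 0) ≠ 0 :=
    qN_ne_zero hr (hb.measurable_weight _).aemeasurable measurableSet_Ioi
      (by simp [Real.volume_Ioi]) fun t ht => hb.weight_ne_zero _ ht
  refine ⟨qN r w (Ioi 0), qN r w (Ioi 0), hw_ne_zero, hbfin, fun f => ?_⟩
  have hnorm : qN r (fun t => w t * ⨆ u ∈ Ioo (0 : ℝ) t,
        ENNReal.ofReal (Kf N₀ N₁ u f / u)) (Ioi 0) =
        qN r w (Ioi 0) * ⨆ t ∈ Ioi (0 : ℝ), ENNReal.ofReal (Kf N₀ N₁ t f / t) := by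
    rw [← qN_mul_const hr (hb.measurable_weight _).aemeasurable]
    refine qN_congr measurableSet_Ioi fun t (ht : 0 < t) => ?_
    rw [iSup_Ioo_eq_iSup_Ioi_of_antitoneOn _ ht]
    exact fun s hs u hu hsu =>
      ENNReal.ofReal_le_ofReal (antitoneOn_Kf_div hN₀ hN₁ f hs hu hsu)
  exact ⟨hnorm.ge, hnorm.le⟩
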